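/- If t, t′ ∈ A are normal-form terms that are equal modulo the equational theory generated by the 3-wnu identities, then t = t′ as formal terms. Consequently every term has a unique normal form, and (A, w^A) is the free X-generated algebra in the variety defined by the 3-wnu identities. -/
import Mathlib


/-- Formal terms built from variables in `V` and a single ternary operation symbol `w`. -/
inductive Term3 (V : Type) : Type
  | var : V → Term3 V
  | w : Term3 V → Term3 V → Term3 V → Term3 V
deriving DecidableEq

/-- Evaluation of a term in an algebra `(B, f)` under a variable assignment `σ`. -/
def Term3.eval {V B : Type} (f : B → B → B → B) (σ : V → B) : Term3 V → B
  | .var v => σ v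
  | .w a b c => f (a.eval f σ) (b.eval f σ) (c.eval f σ)

/-- Renaming/substitution of variables in a term. -/
def Term3.rename {V V' : Type} (ρ : V → V') : Term3 V → Term3 V'
  | .var v => .var (ρ v)
  | .w a b c => .w (a.rename ρ) (b.rename ρ) (c.rename ρ)

/-- A ternary operation `f` satisfies the 3-wnu identities:
`f(x,x,x) = x` and `f(x,x,y) = f(x,y,x) = f(y,x,x)`. -/
def Is3WNU {B : Type} (f : B → B → B → B) : Prop :=
  (∀ x, f x x x = x) ∧ ∀ x y, f x x y = f x y x ∧ f x y x = f y x x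

/-- Two terms are equal modulo the equational theory generated by the 3-wnu identities,
i.e. they evaluate equally in every algebra satisfying the 3-wnu identities. -/
def EqWnu3 {V : Type} (t s : Term3 V) : Prop :=
  ∀ (B : Type) (f : B → B → B → B) (σ : V → B), Is3WNU f → t.eval f σ = s.eval f σ

/-- The set `A` of 3-wnu normal forms (over the countably infinite variable set `ℕ`):
every variable is a normal form, and `w(a₁,a₂,a₃)` is a normal form whenever
`a₁,a₂,a₃` are normal forms with `a₁ ≠ a₂` and `a₁ ≠ a₃`. -/
inductive IsNF3 : Term3 ℕ → Prop
  | var (n : ℕ) : IsNF3 (.var n)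
  | w (a b c : Term3 ℕ) : IsNF3 a → IsNF3 b → IsNF3 c → a ≠ b → a ≠ c →
      IsNF3 (.w a b c)

/-- The normal-form operation `w^A`:
`w^A(a,a,a) = a`; `w^A(a,a,b) = w^A(a,b,a) = w^A(b,a,a) = w(b,a,a)` for `a ≠ b`;
and `w^A(a₁,a₂,a₃) = w(a₁,a₂,a₃)` for pairwise distinct `a₁,a₂,a₃`. -/
def wA3 (a b c : Term3 ℕ) : Term3 ℕ :=
  if a = b then (if b = c then a else .w c a a)
  else if a = c then .w b a a
  else if b = c then .w a b b
  else .w a b c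

/-- The subterm relation `⪯` on normal forms: the reflexive transitive closure of
`{(a,b) : a,b ∈ A, ∃ c d e ∈ A, b = w(c,d,e) ∧ a ∈ {c,d,e}}`. -/
def Sub3 (a b : Term3 ℕ) : Prop :=
  Relation.ReflTransGen
    (fun s t => IsNF3 s ∧ IsNF3 t ∧ ∃ c d e : Term3 ℕ,
      IsNF3 c ∧ IsNF3 d ∧ IsNF3 e ∧ t = .w c d e ∧ (s = c ∨ s = d ∨ s = e)) a b

lemma wA3_is3wnu : Is3WNU wA3 := by
  constructor
  · intro x; simp [wA3]
  · intro x y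
    by_cases h : x = y
    · subst h; simp [wA3]
    constructor
    · simp [wA3, h, Ne.symm h]
    · simp [wA3, h, Ne.symm h]

lemma wA3_nf {a b c : Term3 ℕ} (ha : IsNF3 a) (hb : IsNF3 b) (hc : IsNF3 c) :
    IsNF3 (wA3 a b c) := by
  unfold wA3
  split_ifs with h1 h2 h3 h4
  · exact ha
  · subst h1; exact IsNF3.w _ _ _ hc ha ha (Ne.symm h2) (Ne.symm h2)
  · subst h3; exact IsNF3.w _ _ _ hb ha ha (Ne.symm h1) (Ne.symm h1)
  · subst h4; exact IsNF3.w _ _ _ ha hb hb h1 h1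
  · exact IsNF3.w _ _ _ ha hb hc h1 h3

lemma nf_eval_fix {t : Term3 ℕ} (h : IsNF3 t) : t.eval wA3 Term3.var = t := by
  induction h with
  | var n => rfl
  | w a b c _ _ _ hab hac iha ihb ihc =>
      simp only [Term3.eval, iha, ihb, ihc]
      unfold wA3
      rw [if_neg hab, if_neg hac]
      by_cases hbc : b = c
      · rw [if_pos hbc, hbc]
      · rw [if_neg hbc]

lemma eval_wA3 {B : Type} {f : B → B → B → B} (hf : Is3WNU f) (σ : ℕ → B)
    (a b c : Term3 ℕ) :
    (wA3 a b c).eval f σ = f (a.eval f σ) (b.eval f σ) (c.eval f σ) := by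
  obtain ⟨h1, h2⟩ := hf
  unfold wA3
  split_ifs with e1 e2 e3 e2
  · subst e1; subst e2; exact (h1 _).symm
  · subst e1; show f _ _ _ = _; rw [← (h2 _ _).2, ← (h2 _ _).1]
  · subst e3; show f _ _ _ = _; rw [← (h2 _ _).2]
  · subst e2; rfl
  · rfl

lemma eval_nf_eq {B : Type} {f : B → B → B → B} (hf : Is3WNU f) (σ : ℕ → B)
    (t : Term3 ℕ) : (t.eval wA3 Term3.var).eval f σ = t.eval f σ := by
  induction t with
  | var v => rfl
  | w a b c iha ihb ihc =>
      simp only [Term3.eval]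
      rw [eval_wA3 hf, iha, ihb, ihc]

/-- If `t, t′ ∈ A` are normal forms equal modulo the 3-wnu theory, then
`t = t′` as formal terms. Consequently every term has a unique normal form, and
`(A, w^A)` is the free algebra in the variety defined by the 3-wnu identities:
two terms are equal modulo the theory iff they evaluate equally in `(A, w^A)`
under the identity assignment of variables. -/
theorem statement6 :
    (∀ t t' : Term3 ℕ, IsNF3 t → IsNF3 t' → EqWnu3 t t' → t = t') ∧
    (∀ t : Term3 ℕ, ∃! t' : Term3 ℕ, IsNF3 t' ∧ EqWnu3 t t') ∧
    (∀ t s : Term3 ℕ, EqWnu3 t s ↔ t.eval wA3 Term3.var = s.eval wA3 Term3.var) := by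
  have main : ∀ t t' : Term3 ℕ, IsNF3 t → IsNF3 t' → EqWnu3 t t' → t = t' := by
    intro t t' ht ht' h
    have := h (Term3 ℕ) wA3 Term3.var wA3_is3wnu
    rwa [nf_eval_fix ht, nf_eval_fix ht'] at this
  have eqnf : ∀ t : Term3 ℕ, EqWnu3 t (t.eval wA3 Term3.var) := by
    intro t B f σ hf
    exact (eval_nf_eq hf σ t).symm
  have nfnf : ∀ t : Term3 ℕ, IsNF3 (t.eval wA3 Term3.var) := by
    intro t
    induction t with
    | var v => exact IsNF3.var v
    | w a b c iha ihb ihc => exact wA3_nf iha ihb ihc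
  refine ⟨main, ?_, ?_⟩
  · intro t
    refine ⟨t.eval wA3 Term3.var, ⟨nfnf t, eqnf t⟩, ?_⟩
    rintro y ⟨hy, hey⟩
    refine main y _ hy (nfnf t) ?_
    intro B f σ hf
    rw [← hey B f σ hf]
    exact (eval_nf_eq hf σ t).symm
  · intro t s
    constructor
    · intro h; exact h (Term3 ℕ) wA3 Term3.var wA3_is3wnu
    · intro h B f σ hf
      rw [← eval_nf_eq hf σ t, ← eval_nf_eq hf σ s, h]
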